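/- arXiv:1011.3494 — 2 statements merged into one kernel-verified Lean document; each statement's English description precedes it below -/
import Mathlib

section
/- Let G=(V,E) be a finite simple graph on V={1,…,n} with an Ising model having vertex parameters (θ_i) and edge parameters (θ_{ij}), and let Ĝ=(V̂,Ê) with V̂ = V ∪ {n+1}, Ê = E ∪ {{i,n+1} : i∈V}, carry the zero-field Ising model with θ̂_{i,n+1} = θ_i and θ̂_{ij} = θ_{ij} for {i,j}∈E. Then for every edge {i,j}∈E, the moment of the extended model equals that of the original model: Ê_θ̂[x_i x_j] = E_θ[x_i x_j]. -/
noncomputable section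

/-- The spin value ±1 associated to a Boolean. -/
def spin (b : Bool) : ℝ := if b then 1 else -1

variable {V : Type*} [Fintype V] [DecidableEq V]

/-- The product σᵢσⱼ over an unordered pair. -/
def pairProd (σ : V → ℝ) : Sym2 V → ℝ :=
  Sym2.lift ⟨fun i j => σ i * σ j, fun i j => mul_comm (σ i) (σ j)⟩

/-- Energy (exponent) of an Ising model with vertex parameters θv and edge parameters θe. -/
def energy (G : SimpleGraph V) [DecidableRel G.Adj]
    (θv : V → ℝ) (θe : Sym2 V → ℝ) (x : V → Bool) : ℝ :=
  ∑ i, θv i * spin (x i) + ∑ e ∈ G.edgeFinset, θe e * pairProd (fun i => spin (x i)) e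

/-- Partition function of the Ising model. -/
def partitionFn (G : SimpleGraph V) [DecidableRel G.Adj]
    (θv : V → ℝ) (θe : Sym2 V → ℝ) : ℝ :=
  ∑ x : V → Bool, Real.exp (energy G θv θe x)

/-- Probability mass function of the Ising model. -/
def isingProb (G : SimpleGraph V) [DecidableRel G.Adj]
    (θv : V → ℝ) (θe : Sym2 V → ℝ) (x : V → Bool) : ℝ :=
  Real.exp (energy G θv θe x) / partitionFn G θv θe

/-- Pair moment E_θ[x_i x_j]. -/
def momentPair (G : SimpleGraph V) [DecidableRel G.Adj]
    (θv : V → ℝ) (θe : Sym2 V → ℝ) (i j : V) : ℝ :=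
  ∑ x : V → Bool, isingProb G θv θe x * spin (x i) * spin (x j)

/-- Single-site moment (mean) E_θ[x_i]. -/
def momentSingle (G : SimpleGraph V) [DecidableRel G.Adj]
    (θv : V → ℝ) (θe : Sym2 V → ℝ) (i : V) : ℝ :=
  ∑ x : V → Bool, isingProb G θv θe x * spin (x i)


/-! Gauge away the apex spin: with `x₀` the spin at `none` and `z_v = x_v x₀`, the cone terms
`θ̂_{v,none} x_v x₀ = θ_v z_v` become the fields and `x_u x_v = z_u z_v` leaves the couplings and
the pair moments unchanged. Since `x ↦ (x₀, z)` is a bijection, each `z` comes from exactly two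
configurations of the cone, so `Ẑ = 2Z`, `P̂(x) = P(z)/2`, and the moments agree. -/

lemma spin_beq (a b : Bool) : spin (a == b) = spin a * spin b := by
  cases a <;> cases b <;> norm_num [spin]

lemma spin_mul_self (b : Bool) : spin b * spin b = 1 := by
  cases b <;> norm_num [spin]

@[simp]
lemma pairProd_mk {α : Type*} (σ : α → ℝ) (a b : α) : pairProd σ s(a, b) = σ a * σ b := rfl

/-- The gauge transformation `x ↦ (x₀, (x_v x₀)_v)`, where `x₀` is the spin at the apex `none`. -/
def gaugeEquiv (V : Type*) : (Option V → Bool) ≃ Bool × (V → Bool) where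
  toFun y := (y none, fun v => y (some v) == y none)
  invFun p o := o.elim p.1 fun v => p.2 v == p.1
  left_inv y := by
    funext o
    cases o <;> simp
  right_inv p := by
    ext <;> simp

lemma sum_comp_gauge (F : (V → Bool) → ℝ) :
    ∑ y : Option V → Bool, F (gaugeEquiv V y).2 = 2 * ∑ x, F x := by
  rw [← (gaugeEquiv V).symm.sum_comp, Fintype.sum_prod_type, Fintype.sum_bool]
  simp only [Equiv.apply_symm_apply]
  ring

lemma spin_mul_spin_gauge {α : Type*} (y : Option α → Bool) (a b : α) :
    spin ((gaugeEquiv α y).2 a) * spin ((gaugeEquiv α y).2 b) =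
      spin (y (some a)) * spin (y (some b)) := by
  simp only [gaugeEquiv, Equiv.coe_fn_mk, spin_beq]
  linear_combination spin (y (some a)) * spin (y (some b)) * spin_mul_self (y none)

@[simps]
def coneEdge : V ↪ Sym2 (Option V) :=
  ⟨fun v => s(some v, none), fun a b h => by simpa using h⟩

section Cone

variable {G : SimpleGraph V} [DecidableRel G.Adj] {Ghat : SimpleGraph (Option V)}
  [DecidableRel Ghat.Adj]

lemma edgeFinset_cone (hsome : ∀ i j : V, Ghat.Adj (some i) (some j) ↔ G.Adj i j)
    (hnone : ∀ i : V, Ghat.Adj (some i) none) :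
    Ghat.edgeFinset = G.edgeFinset.map (Function.Embedding.some.sym2Map) ∪
      Finset.univ.map coneEdge := by
  ext e
  induction e using Sym2.ind with
  | _ u v =>
    simp only [SimpleGraph.mem_edgeFinset, SimpleGraph.mem_edgeSet, Finset.mem_union,
      Finset.mem_map, Finset.mem_univ, true_and]
    rcases u with _ | a <;> rcases v with _ | b
    all_goals simp [Sym2.exists, hsome, hnone, (hnone _).symm]
    exact ⟨fun h => ⟨a, b, h, .inl ⟨rfl, rfl⟩⟩,
      by rintro ⟨x, y, h, ⟨rfl, rfl⟩ | ⟨rfl, rfl⟩⟩ <;> simp [h, h.symm]⟩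

lemma disjoint_sym2Map_some_coneEdge {α : Type*} (s : Finset (Sym2 α)) (t : Finset α) :
    Disjoint (s.map Function.Embedding.some.sym2Map) (t.map (coneEdge : α ↪ Sym2 (Option α))) := by
  rw [Finset.disjoint_left]
  intro e he he'
  obtain ⟨d, -, rfl⟩ := Finset.mem_map.1 he
  obtain ⟨v, -, hv⟩ := Finset.mem_map.1 he'
  induction d using Sym2.ind
  simp at hv

lemma energy_cone (hsome : ∀ i j : V, Ghat.Adj (some i) (some j) ↔ G.Adj i j)
    (hnone : ∀ i : V, Ghat.Adj (some i) none) {θv : V → ℝ} {θe : Sym2 V → ℝ}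
    {θhat : Sym2 (Option V) → ℝ} (hθe : ∀ i j : V, G.Adj i j → θhat s(some i, some j) = θe s(i, j))
    (hθv : ∀ i : V, θhat s(some i, none) = θv i) (y : Option V → Bool) :
    energy Ghat (fun _ => 0) θhat y = energy G θv θe (gaugeEquiv V y).2 := by
  rw [energy, energy, edgeFinset_cone hsome hnone,
    Finset.sum_union (disjoint_sym2Map_some_coneEdge _ _), Finset.sum_map, Finset.sum_map]
  simp only [zero_mul, Finset.sum_const_zero, zero_add]
  rw [add_comm]
  congr 1
  · refine Finset.sum_congr rfl fun v _ => ?_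
    simp only [coneEdge_apply, hθv, pairProd_mk, gaugeEquiv, Equiv.coe_fn_mk, spin_beq]
  · refine Finset.sum_congr rfl fun e he => ?_
    induction e using Sym2.ind with
    | _ a b =>
      have hab : G.Adj a b := by simpa using he
      simp only [Function.Embedding.sym2Map_apply, Sym2.map_mk, Function.Embedding.some_apply,
        hθe a b hab, pairProd_mk, spin_mul_spin_gauge]

lemma partitionFn_cone (hsome : ∀ i j : V, Ghat.Adj (some i) (some j) ↔ G.Adj i j)
    (hnone : ∀ i : V, Ghat.Adj (some i) none) {θv : V → ℝ} {θe : Sym2 V → ℝ}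
    {θhat : Sym2 (Option V) → ℝ} (hθe : ∀ i j : V, G.Adj i j → θhat s(some i, some j) = θe s(i, j))
    (hθv : ∀ i : V, θhat s(some i, none) = θv i) :
    partitionFn Ghat (fun _ => 0) θhat = 2 * partitionFn G θv θe := by
  simp only [partitionFn, energy_cone hsome hnone hθe hθv]
  exact sum_comp_gauge (fun x => Real.exp (energy G θv θe x))

lemma isingProb_cone (hsome : ∀ i j : V, Ghat.Adj (some i) (some j) ↔ G.Adj i j)
    (hnone : ∀ i : V, Ghat.Adj (some i) none) {θv : V → ℝ} {θe : Sym2 V → ℝ}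
    {θhat : Sym2 (Option V) → ℝ} (hθe : ∀ i j : V, G.Adj i j → θhat s(some i, some j) = θe s(i, j))
    (hθv : ∀ i : V, θhat s(some i, none) = θv i)
    (y : Option V → Bool) :
    isingProb Ghat (fun _ => 0) θhat y = isingProb G θv θe (gaugeEquiv V y).2 / 2 := by
  rw [isingProb, isingProb, energy_cone hsome hnone hθe hθv, partitionFn_cone hsome hnone hθe hθv]
  ring

end Cone

theorem extended_graph_edge_moments_general
    (G : SimpleGraph V) [DecidableRel G.Adj]
    (Ghat : SimpleGraph (Option V)) [DecidableRel Ghat.Adj]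
    (hsome : ∀ i j : V, Ghat.Adj (some i) (some j) ↔ G.Adj i j)
    (hnone : ∀ i : V, Ghat.Adj (some i) none)
    (θv : V → ℝ) (θe : Sym2 V → ℝ) (θhat : Sym2 (Option V) → ℝ)
    (hθe : ∀ i j : V, G.Adj i j → θhat s(some i, some j) = θe s(i, j))
    (hθv : ∀ i : V, θhat s(some i, none) = θv i)
    (i j : V) :
    momentPair Ghat (fun _ => 0) θhat (some i) (some j) = momentPair G θv θe i j := by
  calc momentPair Ghat (fun _ => 0) θhat (some i) (some j)
      = ∑ y : Option V → Bool, isingProb G θv θe (gaugeEquiv V y).2 *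
          spin ((gaugeEquiv V y).2 i) * spin ((gaugeEquiv V y).2 j) / 2 := by
        refine Finset.sum_congr rfl fun y _ => ?_
        rw [isingProb_cone hsome hnone hθe hθv, mul_assoc, ← spin_mul_spin_gauge]
        ring
    _ = 2 * ∑ x : V → Bool, isingProb G θv θe x * spin (x i) * spin (x j) / 2 :=
        sum_comp_gauge fun x => isingProb G θv θe x * spin (x i) * spin (x j) / 2
    _ = momentPair G θv θe i j := by
        rw [← Finset.sum_div, momentPair]
        ring

/-- For every edge `{i,j}` of `G`, the edge moment of the zero-field Ising
model on the extended graph `Ghat` equals the edge moment of the original Ising model. -/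
theorem extended_graph_edge_moments
    (G : SimpleGraph V) [DecidableRel G.Adj]
    (Ghat : SimpleGraph (Option V)) [DecidableRel Ghat.Adj]
    (hsome : ∀ i j : V, Ghat.Adj (some i) (some j) ↔ G.Adj i j)
    (hnone : ∀ i : V, Ghat.Adj (some i) none)
    (θv : V → ℝ) (θe : Sym2 V → ℝ) (θhat : Sym2 (Option V) → ℝ)
    (hθe : ∀ i j : V, G.Adj i j → θhat s(some i, some j) = θe s(i, j))
    (hθv : ∀ i : V, θhat s(some i, none) = θv i)
    (i j : V) (hij : G.Adj i j) :
    momentPair Ghat (fun _ => 0) θhat (some i) (some j) = momentPair G θv θe i j :=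
  extended_graph_edge_moments_general G Ghat hsome hnone θv θe θhat hθe hθv i j
end
end

section
/- Let G=(V,E) be a finite simple graph and let P_θ be the Ising model on G with vertex parameters (θ_i)_{i∈V} and edge parameters (θ_{ij})_{{i,j}∈E}. If P_θ is zero-mean, i.e. E_θ[x_i] = 0 for every i∈V, then P_θ is zero-field, i.e. θ_i = 0 for every i∈V. -/
noncomputable section

variable {V : Type*} [Fintype V] [DecidableEq V]

private lemma spin_not (b : Bool) : spin (!b) = -spin b := by
  cases b <;> simp [spin]

omit [Fintype V] [DecidableEq V] in
private lemma pairProd_neg (σ : V → ℝ) (e : Sym2 V) :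
    pairProd (fun i => -σ i) e = pairProd σ e := by
  induction e using Sym2.ind with
  | _ i j => simp [pairProd]

private def negEquiv (V : Type*) : (V → Bool) ≃ (V → Bool) :=
  ⟨fun x i => !x i, fun x i => !x i, fun x => by funext i; simp,
    fun x => by funext i; simp⟩

private lemma key_pos (a b : ℝ) (h : a ≠ 0) :
    0 < a * (Real.exp (a + b) - Real.exp (b - a)) := by
  rcases h.lt_or_gt with hlt | hgt
  · have : Real.exp (a + b) < Real.exp (b - a) := Real.exp_lt_exp.2 (by linarith)
    nlinarith
  · have : Real.exp (b - a) < Real.exp (a + b) := Real.exp_lt_exp.2 (by linarith)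
    nlinarith

/-- If the Ising model with vertex parameters `θv` and edge parameters `θe`
is zero-mean (`E_θ[x_i] = 0` for all `i`), then it is zero-field (`θv i = 0` for all `i`). -/
theorem zero_mean_implies_zero_field
    (G : SimpleGraph V) [DecidableRel G.Adj] (θv : V → ℝ) (θe : Sym2 V → ℝ)
    (hzm : ∀ i : V, momentSingle G θv θe i = 0) :
    ∀ i : V, θv i = 0 := by
  classical
  set A : (V → Bool) → ℝ := fun x => ∑ j, θv j * spin (x j) with hA
  set B : (V → Bool) → ℝ :=
    fun x => ∑ e ∈ G.edgeFinset, θe e * pairProd (fun i => spin (x i)) e with hB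
  have hE : ∀ x, energy G θv θe x = A x + B x := fun x => rfl
  -- partition function positive
  have hZpos : 0 < partitionFn G θv θe := by
    have : Nonempty (V → Bool) := ⟨fun _ => true⟩
    exact Finset.sum_pos (fun x _ => Real.exp_pos _) Finset.univ_nonempty
  -- numerator of each moment vanishes
  have hnum : ∀ i, ∑ x : V → Bool, Real.exp (energy G θv θe x) * spin (x i) = 0 := by
    intro i
    have h := hzm i
    unfold momentSingle isingProb at h
    have h2 : (∑ x : V → Bool, Real.exp (energy G θv θe x) * spin (x i)) /
        partitionFn G θv θe = 0 := by
      rw [← h, Finset.sum_div]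
      exact Finset.sum_congr rfl fun x _ => by ring
    exact (div_eq_zero_iff.mp h2).resolve_right (ne_of_gt hZpos)
  -- weighted sum with A vanishes
  have hS : ∑ x : V → Bool, Real.exp (energy G θv θe x) * A x = 0 := by
    calc ∑ x : V → Bool, Real.exp (energy G θv θe x) * A x
        = ∑ x : V → Bool, ∑ j, θv j * (Real.exp (energy G θv θe x) * spin (x j)) := by
          refine Finset.sum_congr rfl fun x _ => ?_
          simp only [hA, Finset.mul_sum]
          exact Finset.sum_congr rfl fun j _ => by ring
      _ = ∑ j, θv j * ∑ x : V → Bool, Real.exp (energy G θv θe x) * spin (x j) := by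
          rw [Finset.sum_comm]
          exact Finset.sum_congr rfl fun j _ => by rw [Finset.mul_sum]
      _ = 0 := by
          refine Finset.sum_eq_zero fun j _ => ?_
          rw [hnum j, mul_zero]
  -- behavior under global spin flip
  have hAneg : ∀ x : V → Bool, A (fun i => !x i) = -A x := by
    intro x
    simp only [hA, spin_not, ← Finset.sum_neg_distrib]
    exact Finset.sum_congr rfl fun j _ => by ring
  have hBneg : ∀ x : V → Bool, B (fun i => !x i) = B x := by
    intro x
    refine Finset.sum_congr rfl fun e _ => ?_
    congr 1
    have : (fun i => spin (!x i)) = fun i => -spin (x i) := by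
      funext i; exact spin_not (x i)
    rw [this, pairProd_neg]
  -- flipped version of hS
  have hS' : ∑ x : V → Bool, Real.exp (B x - A x) * (-(A x)) = 0 := by
    have := Equiv.sum_comp (negEquiv V)
      (fun x => Real.exp (energy G θv θe x) * A x)
    rw [hS] at this
    rw [← this]
    refine Finset.sum_congr rfl fun x _ => ?_
    show Real.exp (B x - A x) * -A x
        = Real.exp (energy G θv θe (negEquiv V x)) * A (negEquiv V x)
    show Real.exp (B x - A x) * -A x
        = Real.exp (energy G θv θe (fun i => !x i)) * A (fun i => !x i)
    rw [hE, hAneg, hBneg]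
    ring_nf
  -- nonnegative sum equal to zero
  have hsum : ∑ x : V → Bool, A x * (Real.exp (A x + B x) - Real.exp (B x - A x)) = 0 := by
    have : ∀ x : V → Bool, A x * (Real.exp (A x + B x) - Real.exp (B x - A x))
        = Real.exp (energy G θv θe x) * A x + Real.exp (B x - A x) * (-(A x)) := by
      intro x; rw [hE]; ring
    rw [Finset.sum_congr rfl fun x _ => this x, Finset.sum_add_distrib, hS, hS', add_zero]
  have hAzero : ∀ x : V → Bool, A x = 0 := by
    intro x
    by_contra hx
    have hpos := key_pos (A x) (B x) hx
    have hnonneg : ∀ y ∈ (Finset.univ : Finset (V → Bool)),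
        0 ≤ A y * (Real.exp (A y + B y) - Real.exp (B y - A y)) := by
      intro y _
      by_cases hy : A y = 0
      · rw [hy]; simp
      · exact le_of_lt (key_pos (A y) (B y) hy)
    have := (Finset.sum_eq_zero_iff_of_nonneg hnonneg).mp hsum x (Finset.mem_univ x)
    exact absurd this (ne_of_gt hpos)
  -- conclude
  intro i
  have h0 := hAzero (fun _ => true)
  have h1 := hAzero (Function.update (fun _ => true) i false)
  simp only [hA] at h0 h1
  have hsplit : ∀ j, θv j * spin (Function.update (fun _ => true) i false j)
      = θv j * spin true - (if j = i then 2 * θv i else 0) := by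
    intro j
    by_cases hj : j = i
    · subst hj; simp [Function.update, spin]; ring
    · simp [Function.update, hj]
  rw [Finset.sum_congr rfl fun j _ => hsplit j, Finset.sum_sub_distrib] at h1
  rw [h0, Finset.sum_ite_eq' Finset.univ i (fun _ => 2 * θv i)] at h1
  simp at h1
  linarith
end
end
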